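/- (Proposition 2.) Assume t_s − t_e ≥ t_k and t_e ≥ 2 t_k. Let p* ∈ [π̲, π̄] satisfy F(p*) = 1 − t_k/t_e. Then (p*, 0) is P1-feasible, and Φ₁(p*, 0) ≤ Φ₁(p, q) for every P1-feasible pair (p, q). That is, when the deadline exceeds the execution time, the optimal strategy runs no portion of the job on the on-demand instance (q* = 0) and bids p* = F^{-1}(1 − t_k/t_e) on the spot instance. -/

import Mathlib

/-- Expected total cost for a one-time request. -/
noncomputable def Phi1 (πlo πhi te : ℝ) (f F : ℝ → ℝ) (p q : ℝ) : ℝ :=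
  q * te * πhi + (1 - q) * te * ((∫ x in πlo..p, x * f x) / F p)

/-- Feasibility for problem (P1). -/
def P1Feasible (πlo πhi tk te ts : ℝ) (F : ℝ → ℝ) (p q : ℝ) : Prop :=
  πlo ≤ p ∧ p ≤ πhi ∧ 0 ≤ q ∧ q ≤ 1 ∧ 0 < F p ∧
  (1 - q) * te * (1 - F p) ≤ tk ∧
  tk * (1 - F p) + (1 - q) * te * F p ≤ ts * F p ∧
  q * te ≤ ts

set_option maxHeartbeats 1000000 in
/-- (Proposition 2.) If `t_s − t_e ≥ t_k` and `t_e ≥ 2 t_k`, and `F(p*) = 1 − t_k/t_e`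
with `p* ∈ [π̲, π̄]`, then `(p*, 0)` is P1-feasible and optimal for (P1). -/
theorem stmt_10
    (πlo πhi : ℝ) (f F : ℝ → ℝ)
    (hπlo : 0 ≤ πlo) (hlt : πlo < πhi)
    (hcont : ContinuousOn f (Set.Icc πlo πhi))
    (hnn : ∀ x ∈ Set.Icc πlo πhi, 0 ≤ f x)
    (hanti : ∀ x ∈ Set.Icc πlo πhi, ∀ y ∈ Set.Icc πlo πhi, x ≤ y → f y ≤ f x)
    (hone : (∫ x in πlo..πhi, f x) = 1)
    (hF : ∀ p, F p = ∫ x in πlo..p, f x)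
    (tk te ts : ℝ) (htk : 0 < tk) (hte : 0 < te) (hts : 0 < ts)
    (h1 : tk ≤ ts - te) (h2 : 2 * tk ≤ te)
    (pstar : ℝ) (hpstar : pstar ∈ Set.Icc πlo πhi)
    (hFstar : F pstar = 1 - tk / te) :
    P1Feasible πlo πhi tk te ts F pstar 0 ∧
    ∀ p q, P1Feasible πlo πhi tk te ts F p q →
      Phi1 πlo πhi te f F pstar 0 ≤ Phi1 πlo πhi te f F p q := by
  obtain ⟨hlostar, hstarhi⟩ := hpstar
  -- integrability lemmas
  have hintf : ∀ a b, πlo ≤ a → a ≤ b → b ≤ πhi →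
      IntervalIntegrable f MeasureTheory.volume a b := by
    intro a b ha hab hb
    apply ContinuousOn.intervalIntegrable
    apply hcont.mono
    rw [Set.uIcc_of_le hab]
    exact Set.Icc_subset_Icc ha hb
  have hcont2 : ContinuousOn (fun x => x * f x) (Set.Icc πlo πhi) :=
    continuousOn_id.mul hcont
  have hintxf : ∀ a b, πlo ≤ a → a ≤ b → b ≤ πhi →
      IntervalIntegrable (fun x => x * f x) MeasureTheory.volume a b := by
    intro a b ha hab hb
    apply ContinuousOn.intervalIntegrable
    apply hcont2.mono
    rw [Set.uIcc_of_le hab]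
    exact Set.Icc_subset_Icc ha hb
  -- F differences
  have hFdiff : ∀ a b, πlo ≤ a → a ≤ b → b ≤ πhi →
      F b - F a = ∫ x in a..b, f x := by
    intro a b ha hab hb
    have := intervalIntegral.integral_add_adjacent_intervals
      (hintf πlo a le_rfl ha (le_trans hab hb)) (hintf a b ha hab hb)
    rw [hF a, hF b]
    linarith [this]
  have hGdiff : ∀ a b, πlo ≤ a → a ≤ b → b ≤ πhi →
      (∫ x in πlo..b, x * f x) - (∫ x in πlo..a, x * f x) = ∫ x in a..b, x * f x := by
    intro a b ha hab hb
    have := intervalIntegral.integral_add_adjacent_intervals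
      (hintxf πlo a le_rfl ha (le_trans hab hb)) (hintxf a b ha hab hb)
    linarith [this]
  -- integral bounds
  have hfnonneg : ∀ a b, πlo ≤ a → a ≤ b → b ≤ πhi → 0 ≤ ∫ x in a..b, f x := by
    intro a b ha hab hb
    apply intervalIntegral.integral_nonneg hab
    intro x hx
    exact hnn x ⟨le_trans ha hx.1, le_trans hx.2 hb⟩
  have hxf_le : ∀ a b, πlo ≤ a → a ≤ b → b ≤ πhi →
      (∫ x in a..b, x * f x) ≤ b * ∫ x in a..b, f x := by
    intro a b ha hab hb
    rw [← intervalIntegral.integral_const_mul]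
    apply intervalIntegral.integral_mono_on hab (hintxf a b ha hab hb)
      ((hintf a b ha hab hb).const_mul b)
    intro x hx
    exact mul_le_mul_of_nonneg_right hx.2 (hnn x ⟨le_trans ha hx.1, le_trans hx.2 hb⟩)
  have hxf_ge : ∀ a b, πlo ≤ a → a ≤ b → b ≤ πhi →
      a * (∫ x in a..b, f x) ≤ ∫ x in a..b, x * f x := by
    intro a b ha hab hb
    rw [← intervalIntegral.integral_const_mul]
    apply intervalIntegral.integral_mono_on hab ((hintf a b ha hab hb).const_mul a)
      (hintxf a b ha hab hb)
    intro x hx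
    exact mul_le_mul_of_nonneg_right hx.1 (hnn x ⟨le_trans ha hx.1, le_trans hx.2 hb⟩)
  have hFmono : ∀ a b, πlo ≤ a → a ≤ b → b ≤ πhi → F a ≤ F b := by
    intro a b ha hab hb
    have := hfnonneg a b ha hab hb
    have := hFdiff a b ha hab hb
    linarith
  have hFhi : F πhi = 1 := by rw [hF]; exact hone
  have hFlo : F πlo = 0 := by
    rw [hF]; simp
  -- basic facts about pstar
  set Sstar := F pstar with hSstardef
  set Gstar := (∫ x in πlo..pstar, x * f x) with hGstardef
  have htkte : tk / te ≤ 1 / 2 := by rw [div_le_iff₀ hte]; linarith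
  have htkte_pos : 0 < tk / te := div_pos htk hte
  have hSstar_pos : 0 < Sstar := by rw [hFstar]; linarith
  have hSstar_lt1 : Sstar < 1 := by rw [hFstar]; linarith
  have hSstar_le1 : Sstar ≤ 1 := le_of_lt hSstar_lt1
  have hSstar_eq : Sstar = ∫ x in πlo..pstar, f x := by
    rw [hSstardef, hF]
  have hGstar_le : Gstar ≤ pstar * Sstar := by
    rw [hSstar_eq]; exact hxf_le πlo pstar le_rfl hlostar hstarhi
  have hGstar_ge : πlo * Sstar ≤ Gstar := by
    rw [hSstar_eq]; exact hxf_ge πlo pstar le_rfl hlostar hstarhi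
  have h_tk_eq : te * (1 - Sstar) = tk := by
    rw [hFstar]; field_simp; ring
  -- concavity: pstar - πlo ≤ Sstar * (πhi - πlo)
  have hfstar_nn : 0 ≤ f pstar := hnn pstar ⟨hlostar, hstarhi⟩
  have hconc : pstar - πlo ≤ Sstar * (πhi - πlo) := by
    have ha : (pstar - πlo) * f pstar ≤ Sstar := by
      rw [hSstar_eq]
      have : (∫ x in πlo..pstar, f pstar) ≤ ∫ x in πlo..pstar, f x := by
        apply intervalIntegral.integral_mono_on hlostar
          intervalIntegrable_const (hintf πlo pstar le_rfl hlostar hstarhi)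
        intro x hx
        exact hanti x ⟨hx.1, le_trans hx.2 hstarhi⟩ pstar ⟨hlostar, hstarhi⟩ hx.2
      rw [intervalIntegral.integral_const, smul_eq_mul] at this
      linarith [this]
    have hb : 1 - Sstar ≤ (πhi - pstar) * f pstar := by
      have heq : 1 - Sstar = ∫ x in pstar..πhi, f x := by
        have := hFdiff pstar πhi hlostar hstarhi le_rfl
        rw [hFhi] at this; linarith
      rw [heq]
      have : (∫ x in pstar..πhi, f x) ≤ ∫ x in pstar..πhi, f pstar := by
        apply intervalIntegral.integral_mono_on hstarhi
          (hintf pstar πhi hlostar hstarhi le_rfl) intervalIntegrable_const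
        intro x hx
        exact hanti pstar ⟨hlostar, hstarhi⟩ x ⟨le_trans hlostar hx.1, hx.2⟩ hx.1
      rw [intervalIntegral.integral_const, smul_eq_mul] at this
      linarith [this]
    have hintb : (pstar - πlo) * (1 - Sstar) ≤ (pstar - πlo) * ((πhi - pstar) * f pstar) :=
      mul_le_mul_of_nonneg_left hb (sub_nonneg.2 hlostar)
    have hinta : (pstar - πlo) * f pstar * (πhi - pstar) ≤ Sstar * (πhi - pstar) :=
      mul_le_mul_of_nonneg_right ha (sub_nonneg.2 hstarhi)
    linarith [hintb, hinta]
  -- feasibility of (pstar, 0)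
  have hfeas : P1Feasible πlo πhi tk te ts F pstar 0 := by
    refine ⟨hlostar, hstarhi, le_refl 0, zero_le_one, hSstar_pos, ?_, ?_, ?_⟩
    · rw [← hSstardef]; linarith [h_tk_eq]
    · rw [← hSstardef]
      have hts' : te + tk ≤ ts := by linarith
      have hSh : 1 / 2 ≤ Sstar := by rw [hFstar]; linarith
      have hint1 : (te + tk) * Sstar ≤ ts * Sstar :=
        mul_le_mul_of_nonneg_right hts' (le_of_lt hSstar_pos)
      have hint2 : 0 ≤ tk * (Sstar - 1 / 2) :=
        mul_nonneg (le_of_lt htk) (by linarith)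
      linarith [hint1, hint2]
    · simpa using le_of_lt hts
  refine ⟨hfeas, ?_⟩
  intro p q ⟨hplo, hphi, hq0, hq1, hSpos, hc2, hc3, _⟩
  set S := F p with hSdef
  set G := (∫ x in πlo..p, x * f x) with hGdef
  have hS_eq : S = ∫ x in πlo..p, f x := by rw [hSdef, hF]
  have hG_le : G ≤ p * S := by
    rw [hS_eq]; exact hxf_le πlo p le_rfl hplo hphi
  have hG_ge : πlo * S ≤ G := by
    rw [hS_eq]; exact hxf_ge πlo p le_rfl hplo hphi
  have hS_le1 : S ≤ 1 := by
    have := hFmono p πhi hplo hphi le_rfl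
    rw [hFhi] at this; exact this
  -- reduce goal
  simp only [Phi1, ← hSstardef, ← hGstardef, ← hSdef, ← hGdef]
  have hAstar_le : Gstar / Sstar ≤ pstar :=
    (div_le_iff₀ hSstar_pos).2 hGstar_le
  have hA_le : G / S ≤ p := (div_le_iff₀ hSpos).2 hG_le
  have hA_ge : πlo ≤ G / S := (le_div_iff₀ hSpos).2 (by linarith)
  have hAS : G / S * S = G := div_mul_cancel₀ _ (ne_of_gt hSpos)
  rcases le_total p pstar with hle | hge
  · -- p ≤ pstar
    have hSle : S ≤ Sstar := hFmono p pstar hplo hle hstarhi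
    have hstep : Gstar - G ≤ pstar * (Sstar - S) := by
      have h1' := hxf_le p pstar hplo hle hstarhi
      have h2' := hGdiff p pstar hplo hle hstarhi
      have h3' := hFdiff p pstar hplo hle hstarhi
      rw [← hSstardef, ← hSdef] at h3'
      rw [← hGstardef, ← hGdef] at h2'
      rw [← h3'] at h1'
      linarith
    have h1S : 0 < 1 - S := by linarith
    have hq : Sstar - S ≤ q * (1 - S) := by
      have hc2' : te * ((1 - q) * (1 - S)) ≤ te * (1 - Sstar) := by
        calc te * ((1 - q) * (1 - S)) = (1 - q) * te * (1 - S) := by ring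
          _ ≤ tk := hc2
          _ = te * (1 - Sstar) := h_tk_eq.symm
      have hq'' : (1 - q) * (1 - S) ≤ 1 - Sstar := le_of_mul_le_mul_left hc2' hte
      linarith [hq'']
    set A := G / S with hAdef
    have hkey1 : pstar - A ≤ Sstar * (πhi - A) := by
      have hint : 0 ≤ (A - πlo) * (1 - Sstar) :=
        mul_nonneg (sub_nonneg.2 hA_ge) (sub_nonneg.2 hSstar_le1)
      linarith [hint, hconc]
    have hpA : 0 ≤ pstar - A := by linarith
    have hkey2 : (1 - S) * (pstar - A) ≤ Sstar * (πhi - A) := by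
      have hint : 0 ≤ S * (pstar - A) := mul_nonneg (le_of_lt hSpos) hpA
      linarith [hint, hkey1]
    have hπhiA : 0 ≤ πhi - A := by linarith
    have hX : 0 ≤ (1 - S) * ((q * πhi + (1 - q) * A) * Sstar - Gstar) := by
      have e1 : Gstar ≤ A * S + pstar * (Sstar - S) := by
        have := hAS; linarith
      have hint1 : (Sstar - S) * (Sstar * (πhi - A)) ≤ (q * (1 - S)) * (Sstar * (πhi - A)) :=
        mul_le_mul_of_nonneg_right hq (mul_nonneg (le_of_lt hSstar_pos) hπhiA)
      have hint2 : (Sstar - S) * ((1 - S) * (pstar - A)) ≤ (Sstar - S) * (Sstar * (πhi - A)) :=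
        mul_le_mul_of_nonneg_left hkey2 (by linarith)
      have hint3 : (1 - S) * Gstar ≤ (1 - S) * (A * S + pstar * (Sstar - S)) :=
        mul_le_mul_of_nonneg_left e1 (le_of_lt h1S)
      linarith [hint1, hint2, hint3]
    have hX' : 0 ≤ (q * πhi + (1 - q) * A) * Sstar - Gstar :=
      nonneg_of_mul_nonneg_right hX h1S
    have hdiv : Gstar / Sstar ≤ q * πhi + (1 - q) * A :=
      (div_le_iff₀ hSstar_pos).2 (by linarith)
    have hint : te * (Gstar / Sstar) ≤ te * (q * πhi + (1 - q) * A) :=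
      mul_le_mul_of_nonneg_left hdiv (le_of_lt hte)
    linarith [hint]
  · -- pstar ≤ p
    have hSge : Sstar ≤ S := hFmono pstar p hlostar hge hphi
    have hstep : pstar * (S - Sstar) ≤ G - Gstar := by
      have h1' := hxf_ge pstar p hlostar hge hphi
      have h2' := hGdiff pstar p hlostar hge hphi
      have h3' := hFdiff pstar p hlostar hge hphi
      rw [← hSstardef, ← hSdef] at h3'
      rw [← hGstardef, ← hGdef] at h2'
      rw [← h3'] at h1'
      linarith
    have hmono : Gstar / Sstar ≤ G / S := by
      rw [div_le_div_iff₀ hSstar_pos hSpos]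
      have hint1 : pstar * (S - Sstar) * Sstar ≤ (G - Gstar) * Sstar :=
        mul_le_mul_of_nonneg_right hstep (le_of_lt hSstar_pos)
      have hint2 : Gstar * (S - Sstar) ≤ pstar * Sstar * (S - Sstar) :=
        mul_le_mul_of_nonneg_right hGstar_le (sub_nonneg.2 hSge)
      linarith [hint1, hint2]
    have hAhi : Gstar / Sstar ≤ πhi := le_trans hAstar_le hstarhi
    have hint1 : te * (1 - q) * (Gstar / Sstar) ≤ te * (1 - q) * (G / S) :=
      mul_le_mul_of_nonneg_left hmono (mul_nonneg (le_of_lt hte) (by linarith : (0:ℝ) ≤ 1 - q))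
    have hint2 : te * q * (Gstar / Sstar) ≤ te * q * πhi :=
      mul_le_mul_of_nonneg_left hAhi (mul_nonneg (le_of_lt hte) hq0)
    linarith [hint1, hint2]
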